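/- arXiv:2603.10244 — 3 statements merged into one kernel-verified Lean document; each statement's English description precedes it below -/
import Mathlib

section
/- For a probability distribution p_1 ≥ p_2 ≥ … ≥ p_n with all p_i > 0, the distribution Q on permutations of [n] defined by Q(π) = (1/Z) · ∏_{i=1}^n p_i^{n-π(i)}, where Z = ∑_{σ ∈ S_n} ∏_{i=1}^n p_i^{n-σ(i)}, satisfies detailed balance for the Transposition Markov chain: for any permutation π and any k ∈ [n-1], letting a = π⁻¹(k), b = π⁻¹(k+1), and π' the permutation obtained from π by swapping the positions of a and b, we have Q(π)·p_b = Q(π')·p_a. -/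
/-- Detailed balance for the Transposition chain.
Positions are 0-indexed: `π i` is the (0-indexed) position of item `i`, and the
exponent `n - π(i)` of the paper becomes `n - 1 - (π i)`. -/
theorem stmt0 (n : ℕ) (hn : 0 < n) (p : Fin n → ℝ)
    (hpos : ∀ i, 0 < p i) (hmono : ∀ i j : Fin n, i ≤ j → p j ≤ p i)
    (hsum : ∑ i, p i = 1)
    (Z : ℝ) (hZ : Z = ∑ σ : Equiv.Perm (Fin n), ∏ i, p i ^ (n - 1 - (σ i : ℕ)))
    (Q : Equiv.Perm (Fin n) → ℝ)
    (hQ : ∀ π : Equiv.Perm (Fin n), Q π = (∏ i, p i ^ (n - 1 - (π i : ℕ))) / Z)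
    (π : Equiv.Perm (Fin n)) (k : Fin n) (hk : (k : ℕ) + 1 < n)
    (a b : Fin n) (ha : a = π.symm k) (hb : b = π.symm ⟨(k : ℕ) + 1, hk⟩)
    (π' : Equiv.Perm (Fin n)) (hπ' : π' = π.trans (Equiv.swap k ⟨(k : ℕ) + 1, hk⟩)) :
    Q π * p b = Q π' * p a := by
  set k' : Fin n := ⟨(k : ℕ) + 1, hk⟩ with hk'
  have hkk' : k ≠ k' := by
    intro h
    have : (k : ℕ) = (k : ℕ) + 1 := congrArg Fin.val h
    omega
  have hab : a ≠ b := by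
    rw [ha, hb]
    intro h
    exact hkk' (π.symm.injective h)
  have hπa : π a = k := by rw [ha]; simp
  have hπb : π b = k' := by rw [hb]; simp
  have hπ'a : π' a = k' := by
    rw [hπ']; simp [Equiv.trans_apply, hπa, Equiv.swap_apply_left]
  have hπ'b : π' b = k := by
    rw [hπ']; simp [Equiv.trans_apply, hπb, Equiv.swap_apply_right]
  have hfix : ∀ i, i ≠ a → i ≠ b → π' i = π i := by
    intro i hia hib
    rw [hπ']
    simp only [Equiv.trans_apply]
    apply Equiv.swap_apply_of_ne_of_ne
    · intro h; exact hia (by rw [ha, ← h]; simp)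
    · intro h; exact hib (by rw [hb, ← h]; simp)
  have hZpos : 0 < Z := by
    rw [hZ]
    apply Finset.sum_pos
    · intro σ _
      exact Finset.prod_pos (fun i _ => pow_pos (hpos i) _)
    · exact Finset.univ_nonempty
  have key : (∏ i, p i ^ (n - 1 - (π i : ℕ))) * p b
      = (∏ i, p i ^ (n - 1 - (π' i : ℕ))) * p a := by
    have hsub : ({a, b} : Finset (Fin n)) ⊆ Finset.univ := Finset.subset_univ _
    have split : ∀ σ : Equiv.Perm (Fin n),
        (∏ i, p i ^ (n - 1 - (σ i : ℕ)))
        = (∏ i ∈ Finset.univ \ {a, b}, p i ^ (n - 1 - (σ i : ℕ)))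
          * (p a ^ (n - 1 - (σ a : ℕ)) * p b ^ (n - 1 - (σ b : ℕ))) := by
      intro σ
      rw [← Finset.prod_sdiff hsub, Finset.prod_pair hab]
    rw [split π, split π']
    have hrest : (∏ i ∈ Finset.univ \ {a, b}, p i ^ (n - 1 - (π i : ℕ)))
        = ∏ i ∈ Finset.univ \ {a, b}, p i ^ (n - 1 - (π' i : ℕ)) := by
      apply Finset.prod_congr rfl
      intro i hi
      simp only [Finset.mem_sdiff, Finset.mem_insert, Finset.mem_singleton] at hi
      rw [hfix i (fun h => hi.2 (Or.inl h)) (fun h => hi.2 (Or.inr h))]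
    rw [hrest, hπa, hπb, hπ'a, hπ'b]
    have h1 : n - 1 - (k : ℕ) = (n - 1 - (k' : ℕ)) + 1 := by
      simp only [hk']; omega
    rw [h1, pow_succ]
    ring
  rw [hQ, hQ, div_mul_eq_mul_div, div_mul_eq_mul_div, key]
end

section
/- The map f : A → B defined by the sign-eliminating algorithm is well-defined: for every input ((w_1,…,w_n), i) ∈ A, the output (w̃_1,…,w̃_n) satisfies (1) each w̃_l uses only letters from {l,…,n}, (2) the lengths |w̃_1|,…,|w̃_n| are a permutation of {0,…,n−1}, and (3) there is a unique deficit letter b_1 ∈ {j,…,n}, i.e., #_l(w̃_1⋯w̃_n) = d_l − 1[l=b_1] for all l ∈ [n]. -/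
/-!
Let `L = |w_i|` and `m = |w_j| - L`. After the steps `t, …, m - 1` have been processed, the state
(words `W`, buffer `v`) satisfies: words of length `< L + t` are untouched, the buffer holds only
letters `≥ k`, the alphabet constraints hold, the lengths of `W` together with
`L + t + |v| - 1` are `{0, …, n - 1}` plus an extra `L` (the truncated `w_j` duplicates `|w_i|`),
and the letters of `W`, of `v` and of the not yet reinserted `b_0, …, b_{t-1}` are counted by `d`.
Tail, exchange and receiver steps all preserve this. The step `t = 0` processes `w_i`, a
receiver, so the final buffer is `[b_0]`: then the lengths are exactly `{0, …, n - 1}` and `b_0`,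
a letter of `w_j` and hence `≥ j`, is the deficit letter.
-/

open Finset

noncomputable section

/-- One step of the sign-eliminating algorithm, processing the word with index
`idx t` (0-indexed step `t`, corresponding to paper step `t+1`).  The state is a
pair (current words, buffer).  `b t` is the `t`-th removed suffix letter of `w_j`
(paper `b_{t+1}`). -/
def stepF (n : ℕ) (j k : Fin n) (b : ℕ → Fin n) (idx : ℕ → Fin n) (t : ℕ)
    (st : (Fin n → List (Fin n)) × List (Fin n)) :
    (Fin n → List (Fin n)) × List (Fin n) :=
  let l := idx t
  if j < l then (st.1, b t :: st.2)                        -- tail: word unchanged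
  else if k < l then                                       -- exchange
    (Function.update st.1 l ((st.1 l).dropLast ++ [b t]), (st.1 l).getLastD (b t) :: st.2)
  else                                                     -- receiver
    (Function.update st.1 l (st.1 l ++ st.2), [b t])

/-- State after processing the `s` largest steps `m−1, m−2, …, m−s` (0-indexed),
starting from buffer `[k]`. -/
def run (n : ℕ) (j k : Fin n) (b : ℕ → Fin n) (idx : ℕ → Fin n) (m : ℕ)
    (init : Fin n → List (Fin n)) : ℕ → (Fin n → List (Fin n)) × List (Fin n)
  | 0 => (init, [k])
  | s + 1 => stepF n j k b idx (m - 1 - s) (run n j k b idx m init s)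

/-- The output of the sign-eliminating algorithm (Algorithm 1) on input
`((w_1,…,w_n), i)` with deficit letter `k`.  Here `L = |w_i|`, `U = |w_j|`,
`m = U − L`, `w_j` is truncated to its first `L` letters, `b` lists the removed
letters, and `idx t` is the unique index with `|w_{idx t}| = L + t`. -/
def algOut (n : ℕ) (j k i : Fin n) (w : Fin n → List (Fin n)) : Fin n → List (Fin n) :=
  let L := (w i).length
  let U := (w j).length
  let m := U - L
  let b : ℕ → Fin n := fun t => ((w j).drop L).getD t k
  let idx : ℕ → Fin n := fun t =>
    @Function.invFun (Fin n) ℕ ⟨j⟩ (fun l => (w l).length) (L + t)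
  (run n j k b idx m (Function.update w j ((w j).take L)) m).1

/-- Membership of `((w, i), k)` in `A` (with `k` the deficit letter):
`i ∈ [j−1]`, alphabet constraints, lengths a permutation of `{0,…,n−1}`,
`|w_i| < |w_j|`, and `k ∈ [i, j−1]` with `#_l(w_1⋯w_n) = d_l − 1[l=k]`. -/
def memA (n : ℕ) (j : Fin n) (d : Fin n → ℕ) (w : Fin n → List (Fin n))
    (i k : Fin n) : Prop :=
  i < j ∧
  (∀ l : Fin n, ∀ a ∈ w l, l ≤ a) ∧
  (∃ σ : Equiv.Perm (Fin n), ∀ l, (w l).length = (σ l : ℕ)) ∧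
  (w i).length < (w j).length ∧
  i ≤ k ∧ k < j ∧
  (∀ l : Fin n, (∑ m, (w m).count l) + (if l = k then 1 else 0) = d l)

open Function

theorem Finset.sum_comp_update_add {α β M : Type*} [Fintype α] [DecidableEq α] [AddCommMonoid M]
    (g : β → M) (W : α → β) (l : α) (v : β) :
    ∑ x, g (update W l v x) + g (W l) = g v + ∑ x, g (W x) := by
  have h := Finset.sum_update_of_mem (mem_univ l) (g ∘ W) (g v)
  rw [← comp_update] at h
  simp only [comp_apply] at h
  rw [h, Finset.sum_eq_sum_sdiff_singleton_add (mem_univ l) (fun x => g (W x)), add_assoc]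

theorem Multiset.cons_map_comp_update {α β γ : Type*} [Fintype α] [DecidableEq α]
    (g : β → γ) (W : α → β) (l : α) (v : β) :
    g (W l) ::ₘ univ.val.map (fun x => g (update W l v x))
      = g v ::ₘ univ.val.map (fun x => g (W x)) := by
  rw [← Multiset.cons_erase (mem_univ_val l)]
  simp only [Multiset.map_cons, update_self]
  rw [Multiset.cons_swap]
  congr 2
  refine Multiset.map_congr rfl fun x hx => ?_
  rw [update_of_ne]
  rintro rfl
  exact Finset.univ.nodup.notMem_erase hx

theorem exists_perm_val_eq_iff {n : ℕ} (f : Fin n → ℕ) :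
    (∃ σ : Equiv.Perm (Fin n), ∀ l, f l = σ l) ↔ univ.val.map f = Multiset.range n := by
  constructor
  · rintro ⟨σ, hσ⟩
    rw [show f = Fin.val ∘ σ from funext hσ, ← Multiset.map_map, Multiset.map_univ_val_equiv]
    simp [List.ofFn_eq_map, Multiset.coe_range]
  · intro h
    have hlt l : f l < n :=
      Multiset.mem_range.1 (h ▸ Multiset.mem_map_of_mem _ (mem_univ_val l))
    have hinj : Injective fun l => (⟨f l, hlt l⟩ : Fin n) := fun x y hxy =>
      Multiset.inj_on_of_nodup_map (h ▸ Multiset.nodup_range n) x (mem_univ_val x) y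
        (mem_univ_val y) (Fin.mk.inj hxy)
    exact ⟨Equiv.ofBijective _ (Finite.injective_iff_bijective.1 hinj), fun l => rfl⟩

theorem eq_of_forall_add_ite_eq {α : Type*} [DecidableEq α] {f g : α → ℕ} {c c' : α}
    (h : ∀ a, f a + (if a = c then 1 else 0) = g a)
    (h' : ∀ a, f a + (if a = c' then 1 else 0) = g a) : c' = c := by
  by_contra hne
  simpa [Ne.symm hne] using (h c).trans (h' c).symm

theorem List.count_map_range_succ {α : Type*} [BEq α] (f : ℕ → α) (t : ℕ) (a : α) :
    ((List.range (t + 1)).map f).count a = ((List.range t).map f).count a + [f t].count a := by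
  rw [List.range_succ, List.map_append, List.count_append, List.map_singleton]

section SignElimination

variable {n : ℕ} {j k : Fin n} {d : Fin n → ℕ} {w W : Fin n → List (Fin n)}
  {v : List (Fin n)} {L t : ℕ} {b idx : ℕ → Fin n}

structure SignElimInv (k : Fin n) (d : Fin n → ℕ) (w : Fin n → List (Fin n)) (L : ℕ)
    (b : ℕ → Fin n) (t : ℕ) (W : Fin n → List (Fin n)) (v : List (Fin n)) : Prop where
  unprocessed : ∀ l, (w l).length < L + t → W l = w l
  buffer_ge : ∀ a ∈ v, k ≤ a
  alphabet : ∀ l, ∀ a ∈ W l, l ≤ a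
  lengths : (L + t + v.length - 1) ::ₘ univ.val.map (fun l => (W l).length)
    = L ::ₘ Multiset.range n
  counts : ∀ a, ∑ l, (W l).count a + v.count a + ((List.range t).map b).count a = d a

theorem SignElimInv.tail (H : SignElimInv k d w L b (t + 1) W v) (hb : k ≤ b t) :
    SignElimInv k d w L b t W (b t :: v) where
  unprocessed l hl := H.unprocessed l (by omega)
  buffer_ge := List.forall_mem_cons.2 ⟨hb, H.buffer_ge⟩
  alphabet := H.alphabet
  lengths := by
    rw [← H.lengths, List.length_cons]
    congr 2
    omega
  counts a := by
    rw [← H.counts a, List.count_map_range_succ, List.count_cons, List.count_singleton]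
    ring

theorem SignElimInv.exchange {l : Fin n} (H : SignElimInv k d w L b (t + 1) W v)
    (hl : (w l).length = L + t) (hne : w l ≠ []) (hkl : k < l) (hlb : l ≤ b t) :
    SignElimInv k d w L b t (update W l ((W l).dropLast ++ [b t]))
      ((W l).getLastD (b t) :: v) := by
  obtain ⟨u, c, hu⟩ : ∃ u c, W l = u ++ [c] := by
    rw [H.unprocessed l (by omega)]
    exact (List.eq_nil_or_concat' (w l)).resolve_left hne
  have hlen : u.length + 1 = L + t := by
    rw [← hl, ← H.unprocessed l (by omega), hu, List.length_append, List.length_singleton]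
  rw [hu, List.dropLast_concat, List.getLastD_concat]
  refine ⟨fun l' hl' => ?_, ?_, fun l' a ha => ?_, ?_, fun a => ?_⟩
  · rw [update_of_ne (by rintro rfl; omega)]
    exact H.unprocessed l' (by omega)
  · refine List.forall_mem_cons.2 ⟨hkl.le.trans (H.alphabet l c ?_), H.buffer_ge⟩
    simp [hu]
  · rcases eq_or_ne l' l with rfl | hne'
    · simp only [update_self, List.mem_append, List.mem_singleton] at ha
      rcases ha with ha | rfl
      · exact H.alphabet l' a (by simp [hu, ha])
      · exact hlb
    · rw [update_of_ne hne'] at ha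
      exact H.alphabet l' a ha
  · have h := Multiset.cons_map_comp_update List.length W l (u ++ [b t])
    simp only [hu, List.length_append, List.length_singleton] at h
    have hP : L + t + (c :: v).length - 1 = L + (t + 1) + v.length - 1 := by
      rw [List.length_cons]
      omega
    rw [hP, ← Multiset.cons_inj_right (u.length + 1), Multiset.cons_swap, h, Multiset.cons_swap,
      H.lengths]
  · have h := Finset.sum_comp_update_add (List.count a) W l (u ++ [b t])
    have h' := H.counts a
    rw [hu, List.count_append, List.count_append] at h
    rw [List.count_map_range_succ] at h'
    simp only [List.count_cons, List.count_nil] at h h' ⊢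
    omega

theorem SignElimInv.receiver {l : Fin n} (H : SignElimInv k d w L b (t + 1) W v)
    (hl : (w l).length = L + t) (hlk : l ≤ k) (hb : k ≤ b t) :
    SignElimInv k d w L b t (update W l (W l ++ v)) [b t] := by
  have hWl : (W l).length = L + t := H.unprocessed l (by omega) ▸ hl
  refine ⟨fun l' hl' => ?_, by simpa using hb, fun l' a ha => ?_, ?_, fun a => ?_⟩
  · rw [update_of_ne (by rintro rfl; omega)]
    exact H.unprocessed l' (by omega)
  · rcases eq_or_ne l' l with rfl | hne
    · simp only [update_self, List.mem_append] at ha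
      exact ha.elim (H.alphabet l' a) fun ha => hlk.trans (H.buffer_ge a ha)
    · rw [update_of_ne hne] at ha
      exact H.alphabet l' a ha
  · have h := Multiset.cons_map_comp_update List.length W l (W l ++ v)
    rw [List.length_append, hWl] at h
    rw [List.length_singleton, show L + t + 1 - 1 = L + t by omega, h, ← H.lengths]
    congr 1
    omega
  · have h := Finset.sum_comp_update_add (List.count a) W l (W l ++ v)
    have h' := H.counts a
    rw [List.count_append] at h
    rw [List.count_map_range_succ] at h'
    omega

theorem SignElimInv.step {St : (Fin n → List (Fin n)) × List (Fin n)}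
    (H : SignElimInv k d w L b (t + 1) St.1 St.2) (hkj : k < j) (h0 : idx 0 ≤ k)
    (hl : (w (idx t)).length = L + t) (hb : j ≤ b t) :
    SignElimInv k d w L b t (stepF n j k b idx t St).1 (stepF n j k b idx t St).2 := by
  simp only [stepF]
  split_ifs with htail hexch
  · exact H.tail (hkj.le.trans hb)
  · refine H.exchange hl (fun he => ?_) hexch ((not_lt.1 htail).trans hb)
    rw [he, List.length_nil] at hl
    obtain rfl : t = 0 := by omega
    exact h0.not_gt hexch
  · exact H.receiver hl (not_lt.1 hexch) (hkj.le.trans hb)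

theorem signElimInv_run {m : ℕ} {init : Fin n → List (Fin n)}
    (H : SignElimInv k d w L b m init [k]) (hkj : k < j) (h0 : idx 0 ≤ k)
    (hl : ∀ t < m, (w (idx t)).length = L + t) (hb : ∀ t < m, j ≤ b t) :
    ∀ s ≤ m, SignElimInv k d w L b (m - s)
      (run n j k b idx m init s).1 (run n j k b idx m init s).2
  | 0, _ => H
  | s + 1, hs => by
    have ih := signElimInv_run H hkj h0 hl hb s (by omega)
    rw [show m - s = m - 1 - s + 1 by omega] at ih
    rw [show m - (s + 1) = m - 1 - s by omega]
    exact ih.step hkj h0 (hl _ (by omega)) (hb _ (by omega))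

theorem run_snd_self {m : ℕ} {init : Fin n → List (Fin n)} (hm : m ≠ 0) (hkj : k < j)
    (h0 : idx 0 ≤ k) : (run n j k b idx m init m).2 = [b 0] := by
  obtain ⟨s, rfl⟩ := Nat.exists_eq_succ_of_ne_zero hm
  rw [run, show s + 1 - 1 - s = 0 by omega]
  simp [stepF, (h0.trans_lt hkj).not_gt, h0.not_gt]

theorem signElimInv_init {m : ℕ} (halpha : ∀ l, ∀ a ∈ w l, l ≤ a)
    (hlengths : univ.val.map (fun l => (w l).length) = Multiset.range n)
    (hcount : ∀ a, ∑ l, (w l).count a + (if a = k then 1 else 0) = d a)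
    (hj : (w j).length = L + m) (hb : (List.range m).map b = (w j).drop L) :
    SignElimInv k d w L b m (update w j ((w j).take L)) [k] where
  unprocessed l hl := update_of_ne (by rintro rfl; omega) _ _
  buffer_ge := by simp
  alphabet l a ha := by
    rcases eq_or_ne l j with rfl | hne
    · rw [update_self] at ha
      exact halpha l a (List.mem_of_mem_take ha)
    · rw [update_of_ne hne] at ha
      exact halpha l a ha
  lengths := by
    have h := Multiset.cons_map_comp_update List.length w j ((w j).take L)
    rw [List.length_take, hj, min_eq_left (by omega), hlengths] at h
    rw [List.length_singleton, Nat.add_sub_cancel, h]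
  counts a := by
    have h := Finset.sum_comp_update_add (List.count a) w j ((w j).take L)
    have hsplit := congrArg (List.count a) (List.take_append_drop L (w j))
    rw [List.count_append] at hsplit
    have := hcount a
    rw [hb]
    simp only [List.count_singleton, beq_iff_eq, eq_comm (a := k)]
    omega

theorem SignElimInv.map_length_eq_range {c : Fin n} (H : SignElimInv k d w L b 0 W [c]) :
    univ.val.map (fun l => (W l).length) = Multiset.range n :=
  (Multiset.cons_inj_right L).1 (by simpa using H.lengths)

theorem SignElimInv.sum_count_add_ite {c : Fin n} (H : SignElimInv k d w L b 0 W [c])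
    (a : Fin n) : ∑ l, (W l).count a + (if a = c then 1 else 0) = d a := by
  simpa [List.count_singleton, @eq_comm _ c] using H.counts a

end SignElimination

theorem stmt14_general (n : ℕ) (j : Fin n) (d : Fin n → ℕ)
    (w : Fin n → List (Fin n)) (i k : Fin n) (h : memA n j d w i k) :
    (∀ l : Fin n, ∀ a ∈ algOut n j k i w l, l ≤ a) ∧
    (∃ σ : Equiv.Perm (Fin n), ∀ l, (algOut n j k i w l).length = (σ l : ℕ)) ∧
    (∃! b1 : Fin n, j ≤ b1 ∧ ∀ l : Fin n,
      (∑ m, (algOut n j k i w m).count l) + (if l = b1 then 1 else 0) = d l) := by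
  obtain ⟨-, halpha, ⟨σ, hσ⟩, hlen, hik, hkj, hcount⟩ := h
  have hrange := (exists_perm_val_eq_iff _).1 ⟨σ, hσ⟩
  have hinj : Injective fun l => (w l).length := fun l l' e =>
    σ.injective (Fin.ext (by rw [← hσ, ← hσ]; exact e))
  simp only [algOut]
  set L := (w i).length
  set m := (w j).length - L
  have hjn : (w j).length < n := hσ j ▸ (σ j).isLt
  set b : ℕ → Fin n := fun t => ((w j).drop L).getD t k
  set idx : ℕ → Fin n := fun t => @invFun (Fin n) ℕ ⟨j⟩ (fun l => (w l).length) (L + t)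
  have hidx t (ht : t < m) : (w (idx t)).length = L + t := by
    have : Nonempty (Fin n) := ⟨j⟩
    exact invFun_eq (f := fun l => (w l).length)
      ⟨σ.symm ⟨L + t, by omega⟩, by rw [hσ, Equiv.apply_symm_apply]⟩
  have hidx0 : idx 0 ≤ k := hinj (hidx 0 (by omega)) ▸ hik
  have hsuffix : (List.range m).map b = (w j).drop L := by
    refine List.ext_getElem (by simp [m]) fun t _ ht => ?_
    rw [List.getElem_map, List.getElem_range]
    exact List.getD_eq_getElem _ _ ht
  have hbj t (ht : t < m) : j ≤ b t :=
    halpha j _ (List.mem_of_mem_drop (hsuffix ▸ List.mem_map_of_mem (List.mem_range.2 ht)))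
  have H := signElimInv_run (signElimInv_init halpha hrange hcount (by omega) hsuffix)
    hkj hidx0 hidx hbj m le_rfl
  rw [Nat.sub_self, run_snd_self (by omega) hkj hidx0] at H
  exact ⟨H.alphabet, (exists_perm_val_eq_iff _).2 H.map_length_eq_range,
    b 0, ⟨hbj 0 (by omega), H.sum_count_add_ite⟩,
    fun c hc => eq_of_forall_add_ite_eq H.sum_count_add_ite hc.2⟩

/-- well-definedness of the sign-eliminating map: the output of the
algorithm on any input from `A` satisfies the alphabet constraints, has lengths
forming a permutation of `{0,…,n−1}`, and has a unique deficit letter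
`b_1 ∈ {j,…,n}`. -/
theorem stmt14 (n : ℕ) (hn : 2 ≤ n) (j : Fin n) (hj : 1 ≤ (j : ℕ))
    (d : Fin n → ℕ) (hd : ∑ l, d l = n.choose 2 + 1)
    (w : Fin n → List (Fin n)) (i k : Fin n) (h : memA n j d w i k) :
    (∀ l : Fin n, ∀ a ∈ algOut n j k i w l, l ≤ a) ∧
    (∃ σ : Equiv.Perm (Fin n), ∀ l, (algOut n j k i w l).length = (σ l : ℕ)) ∧
    (∃! b1 : Fin n, j ≤ b1 ∧ ∀ l : Fin n,
      (∑ m, (algOut n j k i w m).count l) + (if l = b1 then 1 else 0) = d l) :=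
  stmt14_general n j d w i k h

end
end

section
/- The sign-eliminating map f : A → B is injective: from any output (w̃_1,…,w̃_n) ∈ f(A) one can uniquely recover the input ((w_1,…,w_n), i). In particular, the output deficit letter b_1 is determined as the unique letter with #_{b_1}(w̃_1⋯w̃_n) = d_{b_1} − 1, and U is determined as the smallest length greater than L = |w̃_j| whose word ends with a letter in {1,…,j−1}, that last letter being the input deficit letter k. -/
open Finset

noncomputable section

/-!
Write `m = U - L` and let step `t < m` be the one processing the word of length `L + t`. Run
backwards from `t = m - 1`, the algorithm has a closed form: a tail word is unchanged, an exchange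
word has its last letter replaced by `b_t`, and a receiver word gets the current buffer appended,
which makes it exactly as long as the word of the next receiver step above it (or as `w_j`).
So the output lengths are still pairwise distinct, `|w̃_j| = L`, and among the output words of
lengths `L + 1, …, L + m` all but the last end in a letter `≥ j`, while the last one ends in
`k < j`. This determines `m` and `k`, then which steps are receivers (their words have index
`≤ k`), the step each word belongs to, the buffer contents, and every `b_t` except `b_0`, which
is the letter missing from the output count. Undoing each step then recovers the input.
-/

namespace SignElim

section Letters

variable {ι α : Type*} [Fintype ι]

def letters (W : ι → List α) : Multiset α := ∑ l, (W l : Multiset α)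

lemma letters_update [DecidableEq ι] (W : ι → List α) (l : ι) (v : List α) :
    letters (Function.update W l v) + W l = letters W + v := by
  unfold letters
  rw [← Finset.add_sum_erase _ _ (mem_univ l), ← Finset.add_sum_erase _ _ (mem_univ l),
    Finset.sum_congr rfl fun l' hl' => by rw [Function.update_of_ne (ne_of_mem_erase hl')],
    Function.update_self]
  abel

lemma count_letters [DecidableEq α] (W : ι → List α) (x : α) :
    (letters W).count x = ∑ l, (W l).count x := by
  simp [letters, Multiset.count_sum']

end Letters

-- `hne`: an exchange on an empty word would invent a letter through `getLastD`.
lemma letters_stepF {n : ℕ} (j k : Fin n) (b idx : ℕ → Fin n) (t : ℕ)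
    (st : (Fin n → List (Fin n)) × List (Fin n)) (hne : k < idx t → st.1 (idx t) ≠ []) :
    letters (stepF n j k b idx t st).1 + (stepF n j k b idx t st).2
      = letters st.1 + (b t :: st.2 : List (Fin n)) := by
  dsimp only [stepF]
  split_ifs with htail hexch
  · rfl
  all_goals ext x
  · have hu := congrArg (Multiset.count x)
      (letters_update st.1 (idx t) ((st.1 (idx t)).dropLast ++ [b t]))
    have hv := congrArg (List.count x) (List.dropLast_append_getLast (hne hexch))
    rw [List.getLastD_eq_getLast?, List.getLast?_eq_some_getLast (hne hexch), Option.getD_some]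
    simp only [Multiset.count_add, Multiset.coe_count, List.count_append, List.count_cons,
      List.count_nil] at hu hv ⊢
    omega
  · have hu := congrArg (Multiset.count x) (letters_update st.1 (idx t) (st.1 (idx t) ++ st.2))
    simp only [Multiset.count_add, Multiset.coe_count, List.count_append, List.count_cons,
      List.count_nil] at hu ⊢
    omega

structure Input (n : ℕ) (j : Fin n) where
  w : Fin n → List (Fin n)
  i : Fin n
  k : Fin n
  le_of_mem : ∀ l, ∀ x ∈ w l, l ≤ x
  σ : Equiv.Perm (Fin n)
  length_eq : ∀ l, (w l).length = σ l
  length_i_lt_length_j : (w i).length < (w j).length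
  i_le_k : i ≤ k
  k_lt_j : k < j

def Input.ofMemA {n : ℕ} {j : Fin n} {d : Fin n → ℕ} {w : Fin n → List (Fin n)} {i k : Fin n}
    (h : memA n j d w i k) : Input n j :=
  ⟨w, i, k, h.2.1, h.2.2.1.choose, h.2.2.1.choose_spec, h.2.2.2.1, h.2.2.2.2.1,
    h.2.2.2.2.2.1⟩

lemma count_cons_letters_of_memA {n : ℕ} {j : Fin n} {d : Fin n → ℕ} {w : Fin n → List (Fin n)}
    {i k : Fin n} (h : memA n j d w i k) (x : Fin n) : (k ::ₘ letters w).count x = d x := by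
  rw [Multiset.count_cons, count_letters, h.2.2.2.2.2.2 x]

namespace Input

variable {n : ℕ} {j : Fin n} (a : Input n j)

def L : ℕ := (a.w a.i).length
def U : ℕ := (a.w j).length
def m : ℕ := a.U - a.L

def b (t : ℕ) : Fin n := ((a.w j).drop a.L).getD t a.k

/-- The word processed at step `t`: the one of length `L + t`. -/
def idx (t : ℕ) : Fin n := @Function.invFun (Fin n) ℕ ⟨j⟩ (fun l => (a.w l).length) (a.L + t)

def IsReceiver (t : ℕ) : Prop := a.idx t ≤ a.k

instance (t : ℕ) : Decidable (a.IsReceiver t) := inferInstanceAs (Decidable (_ ≤ _))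

lemma length_injective : Function.Injective fun l => (a.w l).length := fun l l' h =>
  a.σ.injective (Fin.ext (by simpa only [a.length_eq] using h))

lemma L_lt_U : a.L < a.U := a.length_i_lt_length_j

lemma U_eq : a.U = a.L + a.m := by have := a.L_lt_U; unfold m; omega

lemma m_pos : 0 < a.m := by have := a.L_lt_U; unfold m; omega

lemma length_idx {t : ℕ} (ht : t ≤ a.m) : (a.w (a.idx t)).length = a.L + t := by
  have hlt : a.L + t < n := by
    have := a.U_eq; have := a.length_eq j; have := (a.σ j).isLt; unfold U at *; omega
  obtain ⟨l, hl⟩ := a.σ.surjective ⟨_, hlt⟩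
  exact @Function.invFun_eq _ _ ⟨j⟩ (fun l => (a.w l).length) _ ⟨l, by simp [a.length_eq, hl]⟩

lemma idx_eq_of_length {t : ℕ} (ht : t ≤ a.m) {l : Fin n} (hl : (a.w l).length = a.L + t) :
    a.idx t = l :=
  a.length_injective ((a.length_idx ht).trans hl.symm)

lemma idx_zero : a.idx 0 = a.i := a.idx_eq_of_length (Nat.zero_le _) rfl

lemma idx_ne_j {t : ℕ} (ht : t < a.m) : a.idx t ≠ j := by
  intro h
  have := a.length_idx ht.le
  rw [h] at this
  have := a.U_eq
  unfold U at *
  omega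

lemma isReceiver_zero : a.IsReceiver 0 := by rw [IsReceiver, idx_zero]; exact a.i_le_k

lemma not_isReceiver_of_lt {t : ℕ} (h : j < a.idx t) : ¬ a.IsReceiver t :=
  fun hr => (lt_asymm h (hr.trans_lt a.k_lt_j)).elim

lemma pos_of_not_isReceiver {t : ℕ} (h : ¬ a.IsReceiver t) : 0 < t :=
  Nat.pos_of_ne_zero fun h0 => h (h0 ▸ a.isReceiver_zero)

lemma b_eq_getElem {t : ℕ} (ht : t < a.m) :
    a.b t = (a.w j)[a.L + t]'(by have := a.U_eq; unfold U at this; omega) := by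
  have := a.U_eq
  unfold U at this
  rw [b, List.getD_eq_getElem _ _ (by simp only [List.length_drop]; omega), List.getElem_drop]

lemma j_le_b {t : ℕ} (ht : t < a.m) : j ≤ a.b t :=
  a.le_of_mem j _ (by rw [a.b_eq_getElem ht]; exact List.getElem_mem _)

lemma exists_nextReceiver (t : ℕ) : ∃ r, t ≤ r ∧ (a.m ≤ r ∨ a.IsReceiver r) :=
  ⟨max t a.m, le_max_left _ _, Or.inl (le_max_right _ _)⟩

def nextReceiver (t : ℕ) : ℕ := Nat.find (a.exists_nextReceiver t)

lemma le_nextReceiver (t : ℕ) : t ≤ a.nextReceiver t := (Nat.find_spec (a.exists_nextReceiver t)).1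

lemma nextReceiver_spec (t : ℕ) : a.m ≤ a.nextReceiver t ∨ a.IsReceiver (a.nextReceiver t) :=
  (Nat.find_spec (a.exists_nextReceiver t)).2

lemma nextReceiver_le {t r : ℕ} (htr : t ≤ r) (hr : a.m ≤ r ∨ a.IsReceiver r) :
    a.nextReceiver t ≤ r :=
  Nat.find_min' _ ⟨htr, hr⟩

lemma isReceiver_nextReceiver {t : ℕ} (h : a.nextReceiver t < a.m) :
    a.IsReceiver (a.nextReceiver t) :=
  (a.nextReceiver_spec t).resolve_left (not_le.2 h)

lemma nextReceiver_le_m {t : ℕ} (ht : t ≤ a.m) : a.nextReceiver t ≤ a.m :=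
  a.nextReceiver_le ht (Or.inl le_rfl)

lemma nextReceiver_eq_self {t : ℕ} (ht : a.m ≤ t ∨ a.IsReceiver t) : a.nextReceiver t = t :=
  (a.nextReceiver_le le_rfl ht).antisymm (a.le_nextReceiver t)

lemma nextReceiver_of_not_isReceiver {t : ℕ} (ht : t < a.m) (hr : ¬ a.IsReceiver t) :
    a.nextReceiver t = a.nextReceiver (t + 1) := by
  have hne : a.nextReceiver t ≠ t := fun h => by
    rcases h ▸ a.nextReceiver_spec t with h | h
    exacts [by omega, hr h]
  refine le_antisymm (a.nextReceiver_le (by have := a.le_nextReceiver (t + 1); omega)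
    (a.nextReceiver_spec _)) (a.nextReceiver_le ?_ (a.nextReceiver_spec t))
  have := a.le_nextReceiver t
  omega

def prevReceiver (u : ℕ) : ℕ := Nat.findGreatest a.IsReceiver (u - 1)

lemma isReceiver_prevReceiver (u : ℕ) : a.IsReceiver (a.prevReceiver u) :=
  Nat.findGreatest_spec (Nat.zero_le _) a.isReceiver_zero

lemma prevReceiver_lt {u : ℕ} (hu : 0 < u) : a.prevReceiver u < u := by
  have := Nat.findGreatest_le (P := a.IsReceiver) (u - 1)
  unfold prevReceiver
  omega

lemma le_nextReceiver_prevReceiver {u : ℕ} (hu : 0 < u) (hum : u ≤ a.m) :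
    u ≤ a.nextReceiver (a.prevReceiver u + 1) := by
  by_contra! h
  have := a.prevReceiver_lt hu
  have := a.le_nextReceiver (a.prevReceiver u + 1)
  rcases a.nextReceiver_spec (a.prevReceiver u + 1) with h' | h'
  · omega
  · exact Nat.findGreatest_is_greatest (n := u - 1) (show a.prevReceiver u < _ by omega)
      (by omega) h'

lemma nextReceiver_prevReceiver {u : ℕ} (hu : 0 < u) (hum : u ≤ a.m)
    (hr : a.m ≤ u ∨ a.IsReceiver u) :
    a.nextReceiver (a.prevReceiver u + 1) = u :=
  (a.nextReceiver_le (a.prevReceiver_lt hu) hr).antisymm (a.le_nextReceiver_prevReceiver hu hum)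

lemma lt_nextReceiver_prevReceiver {u : ℕ} (hu : 0 < u) (hum : u < a.m) (hr : ¬ a.IsReceiver u) :
    u < a.nextReceiver (a.prevReceiver u + 1) := by
  refine (a.le_nextReceiver_prevReceiver hu hum.le).lt_of_ne fun h => ?_
  rcases a.nextReceiver_spec (a.prevReceiver u + 1) with h' | h'
  · omega
  · exact hr (h ▸ h')

/-! `words t` and `buffer t` are the state of the algorithm once steps `m - 1, …, t` are done:
the buffer holds the letters `pushed s` of the non-receiver steps `s` from `t` up to the next
receiver step, followed by `bufLast t`. -/

def bufLast (t : ℕ) : Fin n := if a.nextReceiver t = a.m then a.k else a.b (a.nextReceiver t)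

def pushed (s : ℕ) : Fin n := if j < a.idx s then a.b s else (a.w (a.idx s)).getLastD (a.b s)

def buffer (t : ℕ) : List (Fin n) :=
  (List.range' t (a.nextReceiver t - t)).map a.pushed ++ [a.bufLast t]

def newWord (t : ℕ) : List (Fin n) :=
  if j < a.idx t then a.w (a.idx t)
  else if a.k < a.idx t then (a.w (a.idx t)).dropLast ++ [a.b t]
  else a.w (a.idx t) ++ a.buffer (t + 1)

lemma newWord_of_tail {t : ℕ} (htail : j < a.idx t) : a.newWord t = a.w (a.idx t) :=
  if_pos htail

lemma newWord_of_exchange {t : ℕ} (htail : ¬ j < a.idx t) (hexch : a.k < a.idx t) :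
    a.newWord t = (a.w (a.idx t)).dropLast ++ [a.b t] := by
  rw [newWord, if_neg htail, if_pos hexch]

lemma newWord_of_isReceiver {t : ℕ} (hr : a.IsReceiver t) :
    a.newWord t = a.w (a.idx t) ++ a.buffer (t + 1) := by
  rw [newWord, if_neg fun h => a.not_isReceiver_of_lt h hr, if_neg (not_lt.2 hr)]

def words (t : ℕ) (l : Fin n) : List (Fin n) :=
  if l = j then (a.w j).take a.L
  else if a.L + t ≤ (a.w l).length ∧ (a.w l).length < a.U then a.newWord ((a.w l).length - a.L)
  else a.w l

lemma buffer_m : a.buffer a.m = [a.k] := by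
  simp [buffer, bufLast, a.nextReceiver_eq_self (Or.inl le_rfl)]

lemma buffer_of_isReceiver {t : ℕ} (ht : t < a.m) (hr : a.IsReceiver t) : a.buffer t = [a.b t] := by
  simp [buffer, bufLast, a.nextReceiver_eq_self (Or.inr hr), ht.ne]

lemma buffer_of_not_isReceiver {t : ℕ} (ht : t < a.m) (hr : ¬ a.IsReceiver t) :
    a.buffer t = a.pushed t :: a.buffer (t + 1) := by
  have hnext := a.nextReceiver_of_not_isReceiver ht hr
  have := a.le_nextReceiver (t + 1)
  rw [buffer, buffer, bufLast, bufLast, hnext,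
    show a.nextReceiver (t + 1) - t = a.nextReceiver (t + 1) - (t + 1) + 1 by omega,
    List.range'_succ]
  rfl

lemma words_m : a.words a.m = Function.update a.w j ((a.w j).take a.L) := by
  funext l
  by_cases hl : l = j
  · simp [words, hl]
  · rw [words, if_neg hl, if_neg (by rw [← a.U_eq]; omega), Function.update_of_ne hl]

lemma words_idx {t₀ t : ℕ} (h : t₀ ≤ t) (ht : t < a.m) : a.words t₀ (a.idx t) = a.newWord t := by
  have := a.U_eq
  rw [words, if_neg (a.idx_ne_j ht), a.length_idx ht.le, if_pos (by omega), Nat.add_sub_cancel_left]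

lemma words_succ_idx {t : ℕ} (ht : t < a.m) : a.words (t + 1) (a.idx t) = a.w (a.idx t) := by
  rw [words, if_neg (a.idx_ne_j ht), a.length_idx ht.le, if_neg (by omega)]

lemma words_eq_update {t : ℕ} (ht : t < a.m) :
    a.words t = Function.update (a.words (t + 1)) (a.idx t) (a.newWord t) := by
  funext l
  by_cases hl : l = a.idx t
  · rw [hl, Function.update_self, a.words_idx le_rfl ht]
  · have hlen : (a.w l).length ≠ a.L + t := fun h => hl (a.idx_eq_of_length ht.le h).symm
    rw [Function.update_of_ne hl, words, words]
    congr 1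
    exact if_congr (by omega) rfl rfl

lemma stepF_words {t : ℕ} (ht : t < a.m) :
    stepF n j a.k a.b a.idx t (a.words (t + 1), a.buffer (t + 1)) = (a.words t, a.buffer t) := by
  rw [a.words_eq_update ht]
  dsimp only [stepF]
  rw [a.words_succ_idx ht]
  by_cases htail : j < a.idx t
  · rw [if_pos htail, a.newWord_of_tail htail, ← a.words_succ_idx ht, Function.update_eq_self,
      a.buffer_of_not_isReceiver ht (a.not_isReceiver_of_lt htail), pushed, if_pos htail]
  by_cases hexch : a.k < a.idx t
  · rw [if_neg htail, if_pos hexch, a.newWord_of_exchange htail hexch,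
      a.buffer_of_not_isReceiver ht (not_le.2 hexch), pushed, if_neg htail]
  · rw [if_neg htail, if_neg hexch, a.newWord_of_isReceiver (not_lt.1 hexch),
      a.buffer_of_isReceiver ht (not_lt.1 hexch)]

lemma run_eq {s : ℕ} (hs : s ≤ a.m) :
    run n j a.k a.b a.idx a.m (Function.update a.w j ((a.w j).take a.L)) s
      = (a.words (a.m - s), a.buffer (a.m - s)) := by
  induction s with
  | zero => rw [Nat.sub_zero, a.words_m, a.buffer_m]; rfl
  | succ s ih =>
    rw [run, ih (by omega), show a.m - s = a.m - 1 - s + 1 by omega, a.stepF_words (by omega),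
      show a.m - (s + 1) = a.m - 1 - s by omega]

def out : Fin n → List (Fin n) := a.words 0

lemma algOut_eq : algOut n j a.k a.i a.w = a.out := by
  have := a.run_eq le_rfl
  rw [Nat.sub_self] at this
  exact congrArg Prod.fst this

lemma w_idx_ne_nil {t : ℕ} (ht : 0 < t) (htm : t ≤ a.m) : a.w (a.idx t) ≠ [] := by
  intro h
  have := a.length_idx htm
  rw [h, List.length_nil] at this
  omega

lemma letters_words_add_buffer {t : ℕ} (ht : t ≤ a.m) :
    letters (a.words t) + a.buffer t
      = letters (a.words a.m) + (a.k :: (a.w j).drop (a.L + t) : List (Fin n)) := by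
  induction ht using Nat.decreasingInduction with
  | self =>
    rw [a.buffer_m, ← a.U_eq, U, List.drop_length]
  | of_succ t ht ih =>
    have hne : a.k < a.idx t → a.words (t + 1) (a.idx t) ≠ [] := fun h => by
      rw [a.words_succ_idx ht]
      exact a.w_idx_ne_nil (a.pos_of_not_isReceiver (not_le.2 h)) ht.le
    have hstep := letters_stepF j a.k a.b a.idx t (a.words (t + 1), a.buffer (t + 1)) hne
    rw [a.stepF_words ht] at hstep
    dsimp only at hstep
    have hlen : a.L + t < (a.w j).length := by have := a.U_eq; unfold U at this; omega
    rw [hstep, ← Multiset.cons_coe, Multiset.add_cons, ih, List.drop_eq_getElem_cons hlen,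
      ← a.b_eq_getElem ht]
    simp only [← Multiset.cons_coe, Multiset.add_cons, Multiset.cons_swap, add_assoc]

lemma letters_out : a.b 0 ::ₘ letters a.out = a.k ::ₘ letters a.w := by
  have h := a.letters_words_add_buffer (Nat.zero_le _)
  rw [a.buffer_of_isReceiver a.m_pos a.isReceiver_zero, a.words_m, add_zero] at h
  have hu := letters_update a.w j ((a.w j).take a.L)
  have hw : letters (Function.update a.w j ((a.w j).take a.L)) + ((a.w j).drop a.L : List _)
      = letters a.w := by
    apply add_right_cancel (b := (((a.w j).take a.L : List _) : Multiset (Fin n)))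
    rw [add_assoc, add_comm (((a.w j).drop a.L : List _) : Multiset (Fin n)), Multiset.coe_add,
      List.take_append_drop, hu]
  rw [← Multiset.singleton_add, add_comm, out, ← Multiset.coe_singleton, h, ← Multiset.cons_coe,
    Multiset.add_cons, hw]

lemma length_buffer (t : ℕ) : (a.buffer t).length = a.nextReceiver t - t + 1 := by
  simp [buffer]

/-- The output word of step `t` has length `L + outLength t`. -/
def outLength (t : ℕ) : ℕ := if a.IsReceiver t then a.nextReceiver (t + 1) else t

lemma length_newWord {t : ℕ} (ht : t < a.m) : (a.newWord t).length = a.L + a.outLength t := by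
  have hlen := a.length_idx ht.le
  by_cases hr : a.IsReceiver t
  · have := a.le_nextReceiver (t + 1)
    rw [a.newWord_of_isReceiver hr, List.length_append, hlen, length_buffer, outLength, if_pos hr]
    omega
  · have hne := a.w_idx_ne_nil (a.pos_of_not_isReceiver hr) ht.le
    have := List.length_pos_of_ne_nil hne
    rw [outLength, if_neg hr, newWord]
    split_ifs
    · exact hlen
    · simp only [List.length_append, List.length_dropLast, List.length_singleton]
      omega
    · exact absurd (not_lt.1 ‹_›) hr

lemma outLength_pos (t : ℕ) : 0 < a.outLength t := by
  unfold outLength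
  split_ifs with hr
  · have := a.le_nextReceiver (t + 1); omega
  · exact a.pos_of_not_isReceiver hr

lemma outLength_le_m {t : ℕ} (ht : t < a.m) : a.outLength t ≤ a.m := by
  unfold outLength
  split_ifs
  exacts [a.nextReceiver_le_m ht, ht.le]

lemma isReceiver_outLength_iff {t : ℕ} (hlt : a.outLength t < a.m) :
    a.IsReceiver (a.outLength t) ↔ a.IsReceiver t := by
  unfold outLength at *
  split_ifs at * with hr
  · exact iff_of_true (a.isReceiver_nextReceiver hlt) hr
  · exact Iff.rfl

lemma isReceiver_of_outLength_eq_m {t : ℕ} (ht : t < a.m) (h : a.outLength t = a.m) :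
    a.IsReceiver t := by
  by_contra hr
  rw [outLength, if_neg hr] at h
  omega

lemma outLength_injOn {t t' : ℕ} (ht : t < a.m) (ht' : t' < a.m)
    (h : a.outLength t = a.outLength t') : t = t' := by
  have hiff : a.IsReceiver t ↔ a.IsReceiver t' := by
    rcases (a.outLength_le_m ht).lt_or_eq with hlt | heq
    · rw [← a.isReceiver_outLength_iff hlt, h, a.isReceiver_outLength_iff (h ▸ hlt)]
    · exact iff_of_true (a.isReceiver_of_outLength_eq_m ht heq)
        (a.isReceiver_of_outLength_eq_m ht' (h ▸ heq))
  by_cases hr : a.IsReceiver t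
  · have hr' := hiff.1 hr
    rw [outLength, outLength, if_pos hr, if_pos hr'] at h
    rcases lt_trichotomy t t' with hlt | heq | hlt
    · have := a.nextReceiver_le (show t + 1 ≤ t' from hlt) (Or.inr hr')
      have := a.le_nextReceiver (t' + 1)
      omega
    · exact heq
    · have := a.nextReceiver_le (show t' + 1 ≤ t from hlt) (Or.inr hr)
      have := a.le_nextReceiver (t + 1)
      omega
  · rwa [outLength, outLength, if_neg hr, if_neg (mt hiff.2 hr)] at h

lemma exists_outLength_eq {u : ℕ} (hu : 0 < u) (hum : u ≤ a.m) : ∃ t < a.m, a.outLength t = u := by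
  by_cases h : u < a.m ∧ ¬ a.IsReceiver u
  · exact ⟨u, h.1, if_neg h.2⟩
  · have hr : a.m ≤ u ∨ a.IsReceiver u := by by_contra! h'; exact h h'
    refine ⟨a.prevReceiver u, (a.prevReceiver_lt hu).trans_le hum, ?_⟩
    rw [outLength, if_pos (a.isReceiver_prevReceiver u), a.nextReceiver_prevReceiver hu hum hr]

lemma getLast?_newWord_of_isReceiver {t : ℕ} (hr : a.IsReceiver t) :
    (a.newWord t).getLast? = some (a.bufLast (t + 1)) := by
  rw [a.newWord_of_isReceiver hr, buffer,
    ← List.append_assoc, List.getLast?_concat]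

lemma le_of_getLast?_newWord {t : ℕ} {x : Fin n} (ht : t < a.m) (hlt : a.outLength t < a.m)
    (hx : (a.newWord t).getLast? = some x) : j ≤ x := by
  by_cases hr : a.IsReceiver t
  · rw [outLength, if_pos hr] at hlt
    rw [a.getLast?_newWord_of_isReceiver hr, bufLast, if_neg hlt.ne, Option.some_inj] at hx
    exact hx ▸ a.j_le_b hlt
  by_cases htail : j < a.idx t
  · rw [a.newWord_of_tail htail] at hx
    exact htail.le.trans (a.le_of_mem _ _ (List.mem_of_getLast? hx))
  · rw [a.newWord_of_exchange htail (not_le.1 hr), List.getLast?_concat, Option.some_inj] at hx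
    exact hx ▸ a.j_le_b ht

lemma getLast?_newWord_of_outLength_eq_m {t : ℕ} (ht : t < a.m) (h : a.outLength t = a.m) :
    (a.newWord t).getLast? = some a.k := by
  have hr := a.isReceiver_of_outLength_eq_m ht h
  rw [outLength, if_pos hr] at h
  rw [a.getLast?_newWord_of_isReceiver hr, bufLast, if_pos h]

lemma out_j : a.out j = (a.w j).take a.L := if_pos rfl

lemma length_out_j : (a.out j).length = a.L := by
  rw [out_j, List.length_take]
  exact min_eq_left a.L_lt_U.le

lemma out_idx {t : ℕ} (ht : t < a.m) : a.out (a.idx t) = a.newWord t :=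
  a.words_idx (Nat.zero_le t) ht

lemma out_cases (l : Fin n) : l = j ∨ (∃ t < a.m, a.idx t = l) ∨
    (a.out l = a.w l ∧ ((a.w l).length < a.L ∨ a.U < (a.w l).length)) := by
  by_cases hl : l = j
  · exact Or.inl hl
  have hU : (a.w l).length ≠ a.U := fun h => hl (a.length_injective h)
  have := a.U_eq
  by_cases hp : a.L ≤ (a.w l).length ∧ (a.w l).length < a.U
  · exact Or.inr (Or.inl ⟨_, by omega, a.idx_eq_of_length (t := (a.w l).length - a.L) (by omega)
      (by omega)⟩)
  · exact Or.inr (Or.inr ⟨by rw [out, words, if_neg hl, if_neg (by omega)], by omega⟩)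

lemma length_out_idx {t : ℕ} (ht : t < a.m) :
    (a.out (a.idx t)).length = a.L + a.outLength t := by
  rw [a.out_idx ht, a.length_newWord ht]

lemma length_out_injective : Function.Injective fun l => (a.out l).length := by
  intro l l' h
  simp only at h
  have := a.U_eq
  rcases a.out_cases l with rfl | ⟨t, ht, rfl⟩ | ⟨hl, hlen⟩ <;>
    rcases a.out_cases l' with rfl | ⟨t', ht', rfl⟩ | ⟨hl', hlen'⟩
  · rfl
  · have := a.outLength_pos t'; rw [a.length_out_j, a.length_out_idx ht'] at h; omega
  · rw [a.length_out_j, hl'] at h; omega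
  · have := a.outLength_pos t; rw [a.length_out_j, a.length_out_idx ht] at h; omega
  · rw [a.length_out_idx ht, a.length_out_idx ht'] at h
    rw [a.outLength_injOn ht ht' (by omega)]
  · have := a.outLength_le_m ht; have := a.outLength_pos t
    rw [a.length_out_idx ht, hl'] at h; omega
  · rw [a.length_out_j, hl] at h; omega
  · have := a.outLength_le_m ht'; have := a.outLength_pos t'
    rw [a.length_out_idx ht', hl] at h; omega
  · rw [hl, hl'] at h; exact a.length_injective h

lemma exists_length_out_eq {u : ℕ} (hu : 0 < u) (hum : u ≤ a.m) :
    ∃ l, (a.out l).length = a.L + u := by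
  obtain ⟨t, ht, htu⟩ := a.exists_outLength_eq hu hum
  exact ⟨a.idx t, by rw [a.length_out_idx ht, htu]⟩

lemma exists_idx_of_length_out {l : Fin n} {u : ℕ} (hu : 0 < u) (hum : u ≤ a.m)
    (h : (a.out l).length = a.L + u) : ∃ t < a.m, a.idx t = l ∧ a.outLength t = u := by
  have := a.U_eq
  rcases a.out_cases l with rfl | ⟨t, ht, rfl⟩ | ⟨hl, hlen⟩
  · rw [a.length_out_j] at h; omega
  · exact ⟨t, ht, rfl, by rw [a.length_out_idx ht] at h; omega⟩
  · rw [hl] at h; omega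

lemma le_of_getLast?_out {l : Fin n} {u : ℕ} {x : Fin n} (hu : 0 < u) (hum : u < a.m)
    (h : (a.out l).length = a.L + u) (hx : (a.out l).getLast? = some x) : j ≤ x := by
  obtain ⟨t, ht, rfl, htu⟩ := a.exists_idx_of_length_out hu hum.le h
  rw [a.out_idx ht] at hx
  exact a.le_of_getLast?_newWord ht (htu ▸ hum) hx

lemma getLast?_out_of_length_eq {l : Fin n} (h : (a.out l).length = a.L + a.m) :
    (a.out l).getLast? = some a.k := by
  obtain ⟨t, ht, rfl, htu⟩ := a.exists_idx_of_length_out a.m_pos le_rfl h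
  rw [a.out_idx ht, a.getLast?_newWord_of_outLength_eq_m ht htu]

lemma isReceiver_iff_le_k {l : Fin n} {u : ℕ} (hu : 0 < u) (hum : u < a.m)
    (h : (a.out l).length = a.L + u) : a.IsReceiver u ↔ l ≤ a.k := by
  obtain ⟨t, ht, rfl, rfl⟩ := a.exists_idx_of_length_out hu hum.le h
  exact a.isReceiver_outLength_iff hum

lemma getElem?_out_idx_of_isReceiver {p s : ℕ} (hp : a.IsReceiver p) (hps : p < s) (hsm : s < a.m)
    (hs : s < a.nextReceiver (p + 1)) :
    (a.out (a.idx p))[a.L + s - 1]? = some (a.pushed s) := by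
  have hlen := a.length_idx (t := p) (by omega)
  rw [a.out_idx (hps.trans hsm), a.newWord_of_isReceiver hp, List.getElem?_append_right (by omega),
    hlen, buffer, List.getElem?_append_left (by simp; omega), List.getElem?_map,
    List.getElem?_range' (by omega), Option.map_some]
  congr 2
  omega

lemma getLast?_out_idx_of_isReceiver {p : ℕ} (hpm : p < a.m) (hp : a.IsReceiver p) :
    (a.out (a.idx p)).getLast? = some (a.bufLast (p + 1)) := by
  rw [a.out_idx hpm, a.getLast?_newWord_of_isReceiver hp]

lemma getLast?_out_idx_of_exchange {t : ℕ} (ht : t < a.m) (htail : ¬ j < a.idx t)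
    (hexch : a.k < a.idx t) : (a.out (a.idx t)).getLast? = some (a.b t) := by
  rw [a.out_idx ht, a.newWord_of_exchange htail hexch, List.getLast?_concat]

lemma w_idx_of_isReceiver {t : ℕ} (ht : t < a.m) (hr : a.IsReceiver t) :
    a.w (a.idx t) = (a.out (a.idx t)).take (a.L + t) := by
  rw [a.out_idx ht, a.newWord_of_isReceiver hr, List.take_left' (a.length_idx ht.le)]

lemma w_idx_of_tail {t : ℕ} (ht : t < a.m) (htail : j < a.idx t) :
    a.w (a.idx t) = a.out (a.idx t) := by
  rw [a.out_idx ht, a.newWord_of_tail htail]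

lemma w_idx_of_exchange {t : ℕ} (ht : t < a.m) (htail : ¬ j < a.idx t) (hexch : a.k < a.idx t) :
    a.w (a.idx t) = (a.out (a.idx t)).dropLast ++ [a.pushed t] := by
  have hne := a.w_idx_ne_nil (a.pos_of_not_isReceiver (not_le.2 hexch)) ht.le
  rw [a.out_idx ht, a.newWord_of_exchange htail hexch, List.dropLast_concat, pushed,
    if_neg htail, List.getLastD_eq_getLast?, List.getLast?_eq_some_getLast hne, Option.getD_some,
    List.dropLast_append_getLast]

lemma w_j_eq_append : a.w j = a.out j ++ (List.range a.m).map a.b := by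
  have := a.U_eq
  unfold U at this
  conv_lhs => rw [← List.take_append_drop a.L (a.w j)]
  rw [out_j]
  congr 1
  apply List.ext_getElem (by simp; omega)
  intro t h1 h2
  rw [List.getElem_map, List.getElem_range, a.b_eq_getElem (by simpa using h2), List.getElem_drop]

section Compare

variable {a} {a' : Input n j} (ho : a.out = a'.out)
include ho

lemma L_eq : a.L = a'.L := by rw [← a.length_out_j, ← a'.length_out_j, ho]

lemma m_le : a.m ≤ a'.m := by
  by_contra! h
  obtain ⟨l, hl⟩ := a'.exists_length_out_eq a'.m_pos le_rfl
  have hk := a'.getLast?_out_of_length_eq hl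
  rw [← ho] at hl hk
  exact (a.le_of_getLast?_out a'.m_pos h (by rw [hl, L_eq ho]) hk).not_gt a'.k_lt_j

lemma m_eq : a.m = a'.m := (m_le ho).antisymm (m_le ho.symm)

lemma k_eq : a.k = a'.k := by
  obtain ⟨l, hl⟩ := a.exists_length_out_eq a.m_pos le_rfl
  have hl' : (a'.out l).length = a'.L + a'.m := by rw [← ho, hl, L_eq ho, m_eq ho]
  have hk := a.getLast?_out_of_length_eq hl
  rwa [ho, a'.getLast?_out_of_length_eq hl', Option.some_inj, eq_comm] at hk

lemma isReceiver_iff {u : ℕ} (hu : u < a.m) : a.IsReceiver u ↔ a'.IsReceiver u := by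
  rcases Nat.eq_zero_or_pos u with rfl | hu0
  · exact iff_of_true a.isReceiver_zero a'.isReceiver_zero
  obtain ⟨l, hl⟩ := a.exists_length_out_eq hu0 hu.le
  rw [a.isReceiver_iff_le_k hu0 hu hl,
    a'.isReceiver_iff_le_k hu0 (m_eq ho ▸ hu) (by rw [← ho, hl, L_eq ho]), k_eq ho]

lemma nextReceiver_eq (t : ℕ) : a.nextReceiver t = a'.nextReceiver t := by
  refine Nat.find_congr' fun {r} => and_congr_right fun _ => ?_
  rw [← m_eq ho]
  by_cases hr : a.m ≤ r
  · exact iff_of_true (Or.inl hr) (Or.inl hr)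
  · rw [or_iff_right hr, or_iff_right hr, isReceiver_iff ho (not_le.1 hr)]

lemma outLength_eq {t : ℕ} (ht : t < a.m) : a.outLength t = a'.outLength t := by
  simp only [outLength, isReceiver_iff ho ht, nextReceiver_eq ho]

lemma idx_eq {t : ℕ} (ht : t < a.m) : a.idx t = a'.idx t :=
  a.length_out_injective (show (a.out _).length = (a.out _).length by
    rw [a.length_out_idx ht, ho, a'.length_out_idx (m_eq ho ▸ ht), L_eq ho, outLength_eq ho ht])

lemma i_eq : a.i = a'.i := by rw [← a.idx_zero, ← a'.idx_zero, idx_eq ho a.m_pos]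

lemma pushed_eq {s : ℕ} (hsm : s < a.m) (hr : ¬ a.IsReceiver s) : a.pushed s = a'.pushed s := by
  have hs := a.pos_of_not_isReceiver hr
  have hp := a.isReceiver_prevReceiver s
  have hps := a.prevReceiver_lt hs
  have hlt := a.lt_nextReceiver_prevReceiver hs hsm hr
  have h := a.getElem?_out_idx_of_isReceiver hp hps hsm hlt
  rw [idx_eq ho (hps.trans hsm), ho, L_eq ho, a'.getElem?_out_idx_of_isReceiver
    ((isReceiver_iff ho (hps.trans hsm)).1 hp) hps (m_eq ho ▸ hsm)
    (nextReceiver_eq ho _ ▸ hlt)] at h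
  exact (Option.some_inj.1 h).symm

lemma b_eq (hb : a.b 0 = a'.b 0) {t : ℕ} (ht : t < a.m) : a.b t = a'.b t := by
  have ht' : t < a'.m := m_eq ho ▸ ht
  rcases Nat.eq_zero_or_pos t with rfl | ht0
  · exact hb
  by_cases hr : a.IsReceiver t
  · have hps := a.prevReceiver_lt ht0
    have hnext := a.nextReceiver_prevReceiver ht0 ht.le (Or.inr hr)
    have h := a.getLast?_out_idx_of_isReceiver (hps.trans ht) (a.isReceiver_prevReceiver t)
    rw [idx_eq ho (hps.trans ht), ho, a'.getLast?_out_idx_of_isReceiver (hps.trans ht')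
      ((isReceiver_iff ho (hps.trans ht)).1 (a.isReceiver_prevReceiver t)), Option.some_inj,
      bufLast, bufLast, ← nextReceiver_eq ho, hnext, if_neg ht.ne, if_neg ht'.ne] at h
    exact h.symm
  by_cases htail : j < a.idx t
  · have h := pushed_eq ho ht hr
    rwa [pushed, pushed, if_pos htail, if_pos (idx_eq ho ht ▸ htail)] at h
  · have hexch := not_le.1 hr
    have h := a.getLast?_out_idx_of_exchange ht htail hexch
    rw [idx_eq ho ht, ho, a'.getLast?_out_idx_of_exchange ht' (idx_eq ho ht ▸ htail)
      (k_eq ho ▸ idx_eq ho ht ▸ hexch), Option.some_inj] at h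
    exact h.symm

lemma w_idx_eq {t : ℕ} (ht : t < a.m) : a.w (a.idx t) = a'.w (a'.idx t) := by
  have ht' : t < a'.m := m_eq ho ▸ ht
  have hidx := idx_eq ho ht
  by_cases hr : a.IsReceiver t
  · rw [a.w_idx_of_isReceiver ht hr, a'.w_idx_of_isReceiver ht' ((isReceiver_iff ho ht).1 hr),
      hidx, ho, L_eq ho]
  by_cases htail : j < a.idx t
  · rw [a.w_idx_of_tail ht htail, a'.w_idx_of_tail ht' (hidx ▸ htail), hidx, ho]
  · have hexch := not_le.1 hr
    rw [a.w_idx_of_exchange ht htail hexch,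
      a'.w_idx_of_exchange ht' (hidx ▸ htail) (k_eq ho ▸ hidx ▸ hexch), hidx, ho,
      pushed_eq ho ht hr]

lemma w_eq (hb : a.b 0 = a'.b 0) : a.w = a'.w := by
  funext l
  rcases a.out_cases l with rfl | ⟨t, ht, rfl⟩ | ⟨hl, hlen⟩
  · rw [a.w_j_eq_append, a'.w_j_eq_append, ho, ← m_eq ho]
    exact congrArg _ (List.map_congr_left fun t ht => b_eq ho hb (List.mem_range.1 ht))
  · rw [w_idx_eq ho ht, idx_eq ho ht]
  · have := a.U_eq
    rcases a'.out_cases l with rfl | ⟨t, ht, rfl⟩ | ⟨hl', -⟩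
    · unfold U at *; omega
    · have ht' : t < a.m := m_eq ho ▸ ht
      rw [← idx_eq ho ht', a.length_idx ht'.le] at hlen
      omega
    · rw [← hl, ho, hl']

theorem eq_of_out_eq (hl : a.k ::ₘ letters a.w = a'.k ::ₘ letters a'.w) :
    a.w = a'.w ∧ a.i = a'.i ∧ a.k = a'.k := by
  -- `b 0` leaves with the final buffer: it is the letter the output is short of
  have hb : a.b 0 = a'.b 0 := by
    have h := a.letters_out.trans (hl.trans a'.letters_out.symm)
    rwa [ho, Multiset.cons_inj_left] at h
  exact ⟨w_eq ho hb, i_eq ho, k_eq ho⟩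

end Compare

end Input

end SignElim

theorem stmt15_general (n : ℕ) (j : Fin n)
    (d : Fin n → ℕ)
    (w w' : Fin n → List (Fin n)) (i k i' k' : Fin n)
    (h : memA n j d w i k) (h' : memA n j d w' i' k')
    (heq : algOut n j k i w = algOut n j k' i' w') :
    w = w' ∧ i = i' ∧ k = k' := by
  have hout : (SignElim.Input.ofMemA h).out = (SignElim.Input.ofMemA h').out := by
    rw [← SignElim.Input.algOut_eq, ← SignElim.Input.algOut_eq]
    exact heq
  exact SignElim.Input.eq_of_out_eq hout (Multiset.ext.2 fun x =>
    (SignElim.count_cons_letters_of_memA h x).trans (SignElim.count_cons_letters_of_memA h' x).symm)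

/-- injectivity of the sign-eliminating map: two inputs from `A`
(with their respective deficit letters) producing the same output must coincide;
in particular the input `(w, i)` (and its deficit letter `k`) is uniquely
recoverable from the output. -/
theorem stmt15 (n : ℕ) (hn : 2 ≤ n) (j : Fin n) (hj : 1 ≤ (j : ℕ))
    (d : Fin n → ℕ) (hd : ∑ l, d l = n.choose 2 + 1)
    (w w' : Fin n → List (Fin n)) (i k i' k' : Fin n)
    (h : memA n j d w i k) (h' : memA n j d w' i' k')
    (heq : algOut n j k i w = algOut n j k' i' w') :
    w = w' ∧ i = i' ∧ k = k' :=
  stmt15_general n j d w w' i k i' k' h h' heq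

end
end
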